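/- Let q, t be nonzero complex numbers, let m ≥ 1, and let x_1, …, x_m be nonzero complex numbers satisfying the genericity hypothesis. Then for every n with 0 ≤ n ≤ m, the sum of γ_ε(q,t) over all sign vectors ε ∈ {+1,−1}^m with exactly n entries equal to −1 equals the sum of γ_ε(q,t) over all sign vectors ε with exactly m − n entries equal to −1. (This is identity (3.20) of Theorem 3.1 of the paper, proved there by a residue argument.) -/

import Mathlib

open Finset

/-- `η^{(+,+)}(q,t;ξ)`. -/
noncomputable def etaPP (q t ξ : ℂ) : ℂ := (q * ξ⁻¹ - q⁻¹ * ξ) / (ξ⁻¹ - ξ)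

/-- `η^{(-,+)}(q,t;ξ)`. -/
noncomputable def etaMP (q t ξ : ℂ) : ℂ :=
  (q * t⁻¹ * ξ⁻¹ - q⁻¹ * t * ξ) / (t⁻¹ * ξ⁻¹ - t * ξ)

/-- The coefficients `γ_ε(q,t)` of Theorem 3.1 of the paper, with `ξ_{ij} = x_i / x_j`;
`true` encodes sign `+1` and `false` encodes sign `-1`. -/
noncomputable def gammaCoeff {m : ℕ} (q t : ℂ) (x : Fin m → ℂ) (ε : Fin m → Bool) : ℂ :=
  ∏ i ∈ univ.filter (fun i => ε i = false), ∏ j ∈ univ.filter (fun j => ε j = true),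
    etaPP q t (x i / x j) / etaMP q t (x i / x j)

/-!
Put `c = q²`, `d = t²`, `y_i = x_i²` and
`f(u, v) = (c v - u)(v - d u) / ((v - u)(c v - d u))`. Then `γ_ε = ∏_{i ∈ S, j ∉ S} f(y_i, y_j)`
with `S = M_-(ε)`, and since `f` with `c, d` exchanged is `(u, v) ↦ f(v, u)`, passing from `S` to
its complement exchanges `c` and `d`. So it suffices that `Σ_{|S| = n} ∏_{i ∈ S, j ∉ S} f(y_i, y_j)`
is symmetric in `c` and `d`.

For generic `c`, `d`, `y` this is proved by induction on the number of points. Adjoining a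
point `z` to a set `B`, both sides are rational functions of `z` with simple poles at `y_k`,
`d / c * y_k` and `c / d * y_k` (`k ∈ B`). After clearing denominators their difference is a
polynomial of degree at most `3 |B|`; its top coefficient vanishes by induction, and it vanishes at
the `3 |B|` poles: at `y_k` the residues of the terms with `z ∈ S` and with `z ∉ S` cancel in pairs,
and at the other two families only one kind of term survives, contributing a multiple of the sum
for `B \ {k}`. For arbitrary parameters the identity follows by specialising the
denominator-free identity between independent indeterminates.
-/

open Polynomial

section General

variable {ι : Type*}

theorem swap_mem_offDiag {A : Finset ι} {p : ι × ι} (hp : p ∈ A.offDiag) :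
    p.swap ∈ A.offDiag := by
  obtain ⟨h₁, h₂, h₁₂⟩ := mem_offDiag.mp hp
  exact mem_offDiag.mpr ⟨h₂, h₁, h₁₂.symm⟩

variable [DecidableEq ι]

theorem sum_powersetCard_sdiff {M : Type*} [AddCommMonoid M] {A : Finset ι} {n r : ℕ}
    (h : n + r = #A) (g : Finset ι → M) :
    ∑ U ∈ A.powersetCard r, g U = ∑ T ∈ A.powersetCard n, g (A \ T) := by
  refine sum_nbij' (A \ ·) (A \ ·) ?_ ?_ ?_ ?_ ?_ <;> intro U hU <;>
    obtain ⟨hUA, hUc⟩ := mem_powersetCard.mp hU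
  · exact mem_powersetCard.mpr ⟨sdiff_subset, by rw [card_sdiff_of_subset hUA]; omega⟩
  · exact mem_powersetCard.mpr ⟨sdiff_subset, by rw [card_sdiff_of_subset hUA]; omega⟩
  · exact Finset.sdiff_sdiff_eq_self hUA
  · exact Finset.sdiff_sdiff_eq_self hUA
  · rw [Finset.sdiff_sdiff_eq_self hUA]

theorem sum_powersetCard_erase {M : Type*} [AddCommMonoid M] {B : Finset ι} {k : ι}
    {g : Finset ι → M} (hg : ∀ T ⊆ B, k ∈ T → g T = 0) (n : ℕ) :
    ∑ T ∈ (B.erase k).powersetCard n, g T = ∑ T ∈ B.powersetCard n, g T := by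
  refine sum_subset (powersetCard_mono (erase_subset k B)) fun T hT hT' => ?_
  obtain ⟨hTB, hTc⟩ := mem_powersetCard.mp hT
  refine hg T hTB (by_contra fun hkT => hT' ?_)
  exact mem_powersetCard.mpr ⟨subset_erase.mpr ⟨hTB, hkT⟩, hTc⟩

theorem insert_erase_sdiff {B T : Finset ι} {k : ι} (hk : k ∈ B) (hkT : k ∉ T) :
    insert k (B.erase k \ T) = B \ T := by
  rw [← insert_sdiff_of_notMem _ hkT, insert_erase hk]

theorem sum_filter_card_eq_sum_powersetCard {α M : Type*} [Fintype α] [DecidableEq α]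
    [AddCommMonoid M] (g : Finset α → M) (n : ℕ) :
    ∑ ε ∈ univ.filter (fun ε : α → Bool => (univ.filter fun i => ε i = false).card = n),
      g (univ.filter fun i => ε i = false) = ∑ S ∈ univ.powersetCard n, g S := by
  refine sum_nbij' (fun ε => univ.filter fun i => ε i = false) (fun S i => decide (i ∉ S))
    ?_ ?_ ?_ ?_ fun _ _ => rfl
  · intro ε hε
    exact mem_powersetCard.mpr ⟨subset_univ _, (mem_filter.mp hε).2⟩
  · intro S hS
    simpa using (mem_powersetCard.mp hS).2
  · intro ε _
    funext i
    rcases Bool.eq_false_or_eq_true (ε i) with h | h <;> simp [h]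
  · intro S _
    ext i
    simp

end General

theorem Polynomial.eq_zero_of_natDegree_le_card_of_eval_eq_zero {R : Type*} [CommRing R]
    [IsDomain R] {p : R[X]} (s : Finset R) (hdeg : p.natDegree ≤ #s) (hcoeff : p.coeff #s = 0)
    (heval : ∀ z ∈ s, p.eval z = 0) :
    p = 0 := by
  by_contra hp
  refine hp (eq_zero_of_natDegree_lt_card_of_eval_eq_zero' p s heval (hdeg.lt_of_ne fun e => ?_))
  exact hp (leadingCoeff_eq_zero.mp (by rwa [leadingCoeff, e]))

section CrossSum

variable {R F : Type*} [CommRing R] [Field F] {ι : Type*}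

def crossNum (c d u v : R) : R := (c * v - u) * (v - d * u)

def crossDen (c d u v : R) : R := (v - u) * (c * v - d * u)

theorem crossNum_swap (c d u v : R) : crossNum d c v u = crossNum c d u v := by
  unfold crossNum; ring

theorem crossDen_swap (c d u v : R) : crossDen d c v u = crossDen c d u v := by
  unfold crossDen; ring

noncomputable def crossFactor (c d u v : F) : F := crossNum c d u v / crossDen c d u v

theorem crossFactor_swap (c d u v : F) : crossFactor d c v u = crossFactor c d u v := by
  rw [crossFactor, crossFactor, crossNum_swap, crossDen_swap]

noncomputable def crossProd (c d : F) (y : ι → F) (S U : Finset ι) : F :=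
  ∏ i ∈ S, ∏ j ∈ U, crossFactor c d (y i) (y j)

theorem crossProd_swap (c d : F) (y : ι → F) (S U : Finset ι) :
    crossProd d c y U S = crossProd c d y S U := by
  rw [crossProd, crossProd, prod_comm]
  simp only [crossFactor_swap]

variable [DecidableEq ι]

noncomputable def crossSum (c d : F) (y : ι → F) (A : Finset ι) (n : ℕ) : F :=
  ∑ S ∈ A.powersetCard n, crossProd c d y S (A \ S)

variable (c d : F) (y : ι → F)

theorem crossProd_insert_left {μ : ι} {S : Finset ι} (hμ : μ ∉ S) (U : Finset ι) :
    crossProd c d y (insert μ S) U =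
      (∏ j ∈ U, crossFactor c d (y μ) (y j)) * crossProd c d y S U :=
  prod_insert hμ

theorem crossProd_insert_right {μ : ι} {U : Finset ι} (hμ : μ ∉ U) (S : Finset ι) :
    crossProd c d y S (insert μ U) =
      crossProd c d y S U * ∏ i ∈ S, crossFactor c d (y i) (y μ) := by
  simp only [crossProd, prod_insert hμ, prod_mul_distrib, mul_comm]

theorem crossSum_zero (A : Finset ι) : crossSum c d y A 0 = 1 := by
  simp [crossSum, crossProd]

theorem crossSum_card (A : Finset ι) : crossSum c d y A #A = 1 := by
  simp [crossSum, crossProd]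

theorem crossSum_of_card_lt {A : Finset ι} {n : ℕ} (h : #A < n) : crossSum c d y A n = 0 := by
  simp [crossSum, powersetCard_eq_empty.mpr h]

theorem crossSum_compl {A : Finset ι} {n r : ℕ} (h : n + r = #A) :
    crossSum c d y A r = crossSum d c y A n := by
  rw [crossSum, sum_powersetCard_sdiff h, crossSum]
  refine sum_congr rfl fun T hT => ?_
  rw [Finset.sdiff_sdiff_eq_self (mem_powersetCard.mp hT).1, crossProd_swap d c]

theorem crossSum_insert {μ : ι} {B : Finset ι} (hμ : μ ∉ B) {n r : ℕ} (h : n + 1 + r = #B) :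
    crossSum c d y (insert μ B) (n + 1) =
      ∑ T ∈ B.powersetCard n, crossProd c d y (insert μ T) (B \ T) +
        ∑ T ∈ B.powersetCard r, crossProd d c y (insert μ T) (B \ T) := by
  have hdisj : Disjoint (B.powersetCard (n + 1)) ((B.powersetCard n).image (insert μ)) := by
    refine disjoint_left.mpr fun S hS hS' => ?_
    obtain ⟨T, -, rfl⟩ := mem_image.mp hS'
    exact hμ ((mem_powersetCard.mp hS).1 (mem_insert_self μ T))
  have hinj : Set.InjOn (insert μ) (B.powersetCard n : Set (Finset ι)) := fun T hT T' hT' e => by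
    have hμT : μ ∉ T := fun h => hμ ((mem_powersetCard.mp hT).1 h)
    have hμT' : μ ∉ T' := fun h => hμ ((mem_powersetCard.mp hT').1 h)
    rw [← erase_insert hμT, ← erase_insert hμT', e]
  rw [crossSum, powersetCard_succ_insert hμ, sum_union hdisj, sum_image hinj, add_comm,
    sum_powersetCard_sdiff h]
  congr 1
  · refine sum_congr rfl fun T _ => ?_
    rw [insert_sdiff_insert, sdiff_insert_of_notMem hμ]
  · refine sum_congr rfl fun T hT => ?_
    have hTB := (mem_powersetCard.mp hT).1
    rw [Finset.sdiff_sdiff_eq_self hTB, crossProd_swap,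
      insert_sdiff_of_notMem _ fun h => hμ (hTB h)]

end CrossSum

section InsertPoly

variable {F : Type*} [Field F] {ι : Type*} (c d : F) (y : ι → F)

/-- Its roots `v`, `c / d * v`, `d / c * v` are the poles of `z ↦ crossFactor c d z v` and of
`z ↦ crossFactor c d v z`. -/
noncomputable def poleCubic (v : F) : F[X] :=
  (C v - X) * (C (c * v) - C d * X) * (C (d * v) - C c * X)

noncomputable def numCubic (v : F) : F[X] :=
  (C (c * v) - X) * (C v - C d * X) * (C (d * v) - C c * X)

theorem poleCubic_comm (v : F) : poleCubic d c v = poleCubic c d v := by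
  unfold poleCubic; ring

theorem natDegree_poleCubic_le (v : F) : (poleCubic c d v).natDegree ≤ 3 := by
  unfold poleCubic; compute_degree

theorem coeff_poleCubic (v : F) : (poleCubic c d v).coeff 3 = -(c * d) := by
  simp [poleCubic, coeff_mul, Finset.Nat.antidiagonal_succ, coeff_X, coeff_C]; ring

theorem natDegree_numCubic_le (v : F) : (numCubic c d v).natDegree ≤ 3 := by
  unfold numCubic; compute_degree

theorem coeff_numCubic (v : F) : (numCubic c d v).coeff 3 = -(c * d) := by
  simp [numCubic, coeff_mul, Finset.Nat.antidiagonal_succ, coeff_X, coeff_C]; ring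

theorem eval_numCubic_self_swap (v : F) :
    eval v (numCubic d c v) = -eval v (numCubic c d v) := by
  simp only [numCubic, eval_mul, eval_sub, eval_C, eval_X]; ring

theorem eval_div_mul_poleCubic (hc : c ≠ 0) (v : F) :
    eval (d / c * v) (poleCubic c d v) = 0 := by
  simp only [poleCubic, eval_mul, eval_sub, eval_C, eval_X]
  field_simp; ring

theorem eval_div_mul_numCubic (hc : c ≠ 0) (v : F) :
    eval (d / c * v) (numCubic c d v) = 0 := by
  simp only [numCubic, eval_mul, eval_sub, eval_C, eval_X]
  field_simp; ring

theorem crossFactor_mul_eval_poleCubic {z v : F} (h₁ : v ≠ z) (h₂ : c * v ≠ d * z) :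
    crossFactor c d z v * eval z (poleCubic c d v) = eval z (numCubic c d v) := by
  have hden : crossDen c d z v ≠ 0 := mul_ne_zero (sub_ne_zero.mpr h₁) (sub_ne_zero.mpr h₂)
  rw [crossFactor, div_mul_eq_mul_div, div_eq_iff hden]
  simp only [poleCubic, numCubic, crossNum, crossDen, eval_mul, eval_sub, eval_C, eval_X]
  ring

theorem crossFactor_div_mul (hc : c ≠ 0) (hd : d ≠ 0) (u v : F) :
    crossFactor d c (d / c * u) v = crossFactor c d u v := by
  have hnum : crossNum d c (d / c * u) v = d / c * crossNum c d u v := by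
    unfold crossNum; field_simp
  have hden : crossDen d c (d / c * u) v = d / c * crossDen c d u v := by
    unfold crossDen; field_simp
  rw [crossFactor, crossFactor, hnum, hden, mul_div_mul_left _ _ (div_ne_zero hd hc)]

theorem crossFactor_mul_eval_div_mul_poleCubic (hc : c ≠ 0) (hd : d ≠ 0) {u w : F}
    (h₁ : u ≠ w) (h₂ : c * u ≠ d * w) :
    crossFactor d c u w * eval (d / c * w) (poleCubic d c u) =
      eval (d / c * w) (numCubic d c u) := by
  rw [crossFactor_swap c d w u, ← crossFactor_div_mul c d hc hd w u]
  refine crossFactor_mul_eval_poleCubic d c (fun h => h₂ ?_) (fun h => h₁ ?_)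
  · rw [h]; field_simp
  · apply mul_left_cancel₀ hd; rw [h]; field_simp

noncomputable def poleProd (B : Finset ι) : F[X] := ∏ j ∈ B, poleCubic c d (y j)

theorem poleProd_comm (B : Finset ι) : poleProd d c y B = poleProd c d y B := by
  simp only [poleProd, poleCubic_comm]

variable [DecidableEq ι]

noncomputable def insertTerm (B T : Finset ι) : F[X] :=
  ∏ j ∈ B, if j ∈ T then poleCubic c d (y j) else numCubic c d (y j)

/-- The part of `crossSum` over `B ∪ {z}` coming from the subsets that contain a new point `z`,
multiplied by `poleProd` to clear its poles in `z`. -/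
noncomputable def insertPoly (B : Finset ι) (n : ℕ) : F[X] :=
  ∑ T ∈ B.powersetCard n, C (crossProd c d y T (B \ T)) * insertTerm c d y B T

theorem natDegree_insertTerm_le (B T : Finset ι) :
    (insertTerm c d y B T).natDegree ≤ 3 * #B := by
  refine (natDegree_prod_le _ _).trans ?_
  calc ∑ j ∈ B, _ ≤ ∑ _j ∈ B, 3 := sum_le_sum fun j _ => by
        split_ifs
        exacts [natDegree_poleCubic_le c d _, natDegree_numCubic_le c d _]
    _ = 3 * #B := by rw [sum_const, smul_eq_mul, mul_comm]

theorem coeff_insertTerm (B T : Finset ι) :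
    (insertTerm c d y B T).coeff (3 * #B) = (-(c * d)) ^ #B := by
  have hdeg : ∀ j ∈ B,
      (if j ∈ T then poleCubic c d (y j) else numCubic c d (y j)).natDegree ≤ 3 := fun j _ => by
    split_ifs
    exacts [natDegree_poleCubic_le c d _, natDegree_numCubic_le c d _]
  rw [insertTerm, mul_comm, coeff_prod_of_natDegree_le (n := 3) (h := hdeg), ← prod_const]
  refine prod_congr rfl fun j _ => ?_
  split_ifs
  exacts [coeff_poleCubic c d _, coeff_numCubic c d _]

theorem natDegree_insertPoly_le (B : Finset ι) (n : ℕ) :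
    (insertPoly c d y B n).natDegree ≤ 3 * #B :=
  natDegree_sum_le_of_forall_le _ _ fun T _ =>
    (natDegree_C_mul_le _ _).trans (natDegree_insertTerm_le c d y B T)

theorem coeff_insertPoly (B : Finset ι) (n : ℕ) :
    (insertPoly c d y B n).coeff (3 * #B) = (-(c * d)) ^ #B * crossSum c d y B n := by
  rw [insertPoly, finsetSum_coeff, crossSum, mul_sum]
  refine sum_congr rfl fun T _ => ?_
  rw [coeff_C_mul, coeff_insertTerm, mul_comm]

theorem eval_insertTerm {z : F} {B : Finset ι} (hz : ∀ j ∈ B, y j ≠ z ∧ c * y j ≠ d * z)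
    (T : Finset ι) :
    eval z (insertTerm c d y B T) =
      eval z (poleProd c d y B) * ∏ j ∈ B \ T, crossFactor c d z (y j) := by
  have hfactor : ∀ j ∈ B, eval z (if j ∈ T then poleCubic c d (y j) else numCubic c d (y j)) =
      eval z (poleCubic c d (y j)) * if j ∈ T then 1 else crossFactor c d z (y j) := by
    intro j hj
    split_ifs
    · rw [mul_one]
    · rw [mul_comm, crossFactor_mul_eval_poleCubic c d (hz j hj).1 (hz j hj).2]
  rw [insertTerm, eval_prod, prod_congr rfl hfactor, prod_mul_distrib, poleProd, eval_prod,
    sdiff_eq_filter, prod_filter]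
  simp only [ite_not]

theorem eval_insertTerm_of_mem {B T : Finset ι} {k : ι} (hk : k ∈ T) (hTB : T ⊆ B) :
    eval (y k) (insertTerm c d y B T) = 0 := by
  rw [insertTerm, eval_prod]
  exact prod_eq_zero (hTB hk) (by simp [hk, poleCubic])

theorem eval_div_mul_insertTerm (hc : c ≠ 0) {B : Finset ι} {k : ι} (hk : k ∈ B)
    (T : Finset ι) :
    eval (d / c * y k) (insertTerm c d y B T) = 0 := by
  rw [insertTerm, eval_prod]
  refine prod_eq_zero hk ?_
  split_ifs
  exacts [eval_div_mul_poleCubic c d hc _, eval_div_mul_numCubic c d hc _]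

theorem eval_insertPoly {z : F} {B : Finset ι} (hz : ∀ j ∈ B, y j ≠ z ∧ c * y j ≠ d * z)
    (n : ℕ) :
    eval z (insertPoly c d y B n) = eval z (poleProd c d y B) *
      ∑ T ∈ B.powersetCard n,
        (∏ j ∈ B \ T, crossFactor c d z (y j)) * crossProd c d y T (B \ T) := by
  simp only [insertPoly, eval_finsetSum, eval_mul, eval_C, eval_insertTerm c d y hz, mul_sum]
  exact sum_congr rfl fun T _ => by ring

end InsertPoly

section Roots

variable {F : Type*} [Field F] {ι : Type*} [DecidableEq ι] (c d : F) (y : ι → F)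

theorem eval_self_insertPoly {B : Finset ι} {k : ι} (hk : k ∈ B)
    (hy : ∀ j ∈ B.erase k, y j ≠ y k ∧ c * y j ≠ d * y k) (n : ℕ) :
    eval (y k) (insertPoly c d y B n) =
      eval (y k) (numCubic c d (y k)) * eval (y k) (poleProd c d y (B.erase k)) *
        ∑ T ∈ (B.erase k).powersetCard n, crossProd c d y T (B.erase k \ T) *
          (∏ i ∈ T, crossFactor c d (y i) (y k)) *
            ∏ j ∈ B.erase k \ T, crossFactor c d (y k) (y j) := by
  rw [insertPoly, eval_finsetSum, ← sum_powersetCard_erase (k := k) fun T hTB hkT => by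
    rw [eval_mul, eval_insertTerm_of_mem c d y hkT hTB, mul_zero], mul_sum]
  refine sum_congr rfl fun T hT => ?_
  have hkT : k ∉ T := fun h => notMem_erase k B ((mem_powersetCard.mp hT).1 h)
  rw [eval_mul, eval_C, insertTerm, ← mul_prod_erase B _ hk, if_neg hkT, eval_mul, ← insertTerm,
    eval_insertTerm c d y hy, ← insert_erase_sdiff hk hkT,
    crossProd_insert_right c d y (notMem_sdiff_of_notMem_left (notMem_erase k B))]
  ring

theorem eval_self_insertPoly_add_swap {B : Finset ι} {k : ι} (hk : k ∈ B)
    (hy : ∀ j ∈ B.erase k, y j ≠ y k ∧ c * y j ≠ d * y k ∧ d * y j ≠ c * y k) {n r : ℕ}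
    (h : n + r = #(B.erase k)) :
    eval (y k) (insertPoly c d y B n) + eval (y k) (insertPoly d c y B r) = 0 := by
  rw [eval_self_insertPoly c d y hk (fun j hj => ⟨(hy j hj).1, (hy j hj).2.1⟩),
    eval_self_insertPoly d c y hk (fun j hj => ⟨(hy j hj).1, (hy j hj).2.2⟩),
    eval_numCubic_self_swap, poleProd_comm, sum_powersetCard_sdiff h]
  have hsum : ∑ T ∈ (B.erase k).powersetCard n,
      crossProd d c y (B.erase k \ T) (B.erase k \ (B.erase k \ T)) *
        (∏ i ∈ B.erase k \ T, crossFactor d c (y i) (y k)) *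
          ∏ j ∈ B.erase k \ (B.erase k \ T), crossFactor d c (y k) (y j) =
      ∑ T ∈ (B.erase k).powersetCard n, crossProd c d y T (B.erase k \ T) *
        (∏ i ∈ T, crossFactor c d (y i) (y k)) *
          ∏ j ∈ B.erase k \ T, crossFactor c d (y k) (y j) := by
    refine sum_congr rfl fun T hT => ?_
    rw [Finset.sdiff_sdiff_eq_self (mem_powersetCard.mp hT).1, crossProd_swap]
    simp only [crossFactor_swap]
    ring
  rw [hsum]
  ring

theorem eval_div_mul_insertPoly (hc : c ≠ 0) {B : Finset ι} {k : ι} (hk : k ∈ B) (n : ℕ) :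
    eval (d / c * y k) (insertPoly c d y B n) = 0 := by
  simp [insertPoly, eval_finsetSum, eval_div_mul_insertTerm c d y hc hk]

theorem eval_div_mul_insertPoly_swap (hc : c ≠ 0) (hd : d ≠ 0) {B : Finset ι} {k : ι}
    (hk : k ∈ B) (hy : ∀ j ∈ B.erase k, y j ≠ y k ∧ c * y j ≠ d * y k) (n : ℕ) :
    eval (d / c * y k) (insertPoly d c y B n) =
      (∏ j ∈ B, eval (d / c * y k) (numCubic d c (y j))) * crossSum d c y (B.erase k) n := by
  rw [insertPoly, eval_finsetSum, ← sum_powersetCard_erase (k := k) fun T hTB hkT => by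
    rw [eval_mul, insertTerm, eval_prod, prod_eq_zero (hTB hkT) (by
      rw [if_pos hkT, poleCubic_comm, eval_div_mul_poleCubic c d hc]), mul_zero],
    crossSum, mul_sum]
  refine sum_congr rfl fun T hT => ?_
  have hTB : T ⊆ B.erase k := (mem_powersetCard.mp hT).1
  have hkT : k ∉ T := fun h => notMem_erase k B (hTB h)
  have hfactors : (∏ i ∈ T, crossFactor d c (y i) (y k)) *
      eval (d / c * y k) (insertTerm d c y B T) =
        ∏ j ∈ B, eval (d / c * y k) (numCubic d c (y j)) := by
    have hT : ∏ i ∈ T, crossFactor d c (y i) (y k) =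
        ∏ j ∈ B, if j ∈ T then crossFactor d c (y j) (y k) else 1 := by
      rw [prod_ite_mem, inter_eq_right.mpr (hTB.trans (erase_subset k B))]
    rw [hT, insertTerm, eval_prod, ← prod_mul_distrib]
    refine prod_congr rfl fun j hj => ?_
    split_ifs with hjT
    · have hjk : j ≠ k := fun h => hkT (h ▸ hjT)
      exact crossFactor_mul_eval_div_mul_poleCubic c d hc hd
        (hy j (mem_erase.mpr ⟨hjk, hj⟩)).1 (hy j (mem_erase.mpr ⟨hjk, hj⟩)).2
    · rw [one_mul]
  rw [eval_mul, eval_C, ← insert_erase_sdiff hk hkT,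
    crossProd_insert_right d c y (notMem_sdiff_of_notMem_left (notMem_erase k B)), mul_assoc,
    hfactors, mul_comm]

end Roots

section Generic

variable {F : Type*} [Field F] {ι : Type*} {c d : F} {y : ι → F}

/-- Makes the interpolation nodes `y k`, `d / c * y k`, `c / d * y k` pairwise distinct. -/
structure GenericPoints (c d : F) (y : ι → F) (A : Finset ι) : Prop where
  injOn : Set.InjOn y A
  mul_ne : ∀ i ∈ A, ∀ j ∈ A, c * y i ≠ d * y j
  sq_mul_ne : ∀ i ∈ A, ∀ j ∈ A, c ^ 2 * y i ≠ d ^ 2 * y j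

theorem GenericPoints.mono {A B : Finset ι} (h : GenericPoints c d y A) (hBA : B ⊆ A) :
    GenericPoints c d y B :=
  ⟨h.injOn.mono (by exact_mod_cast hBA), fun i hi j hj => h.mul_ne i (hBA hi) j (hBA hj),
    fun i hi j hj => h.sq_mul_ne i (hBA hi) j (hBA hj)⟩

theorem GenericPoints.swap {A : Finset ι} (h : GenericPoints c d y A) : GenericPoints d c y A :=
  ⟨h.injOn, fun i hi j hj e => h.mul_ne j hj i hi e.symm,
    fun i hi j hj e => h.sq_mul_ne j hj i hi e.symm⟩

variable (c d y) in
def interpolationNodes [DecidableEq F] (B : Finset ι) : Finset F :=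
  B.image y ∪ B.image (fun k => d / c * y k) ∪ B.image (fun k => c / d * y k)

theorem card_interpolationNodes [DecidableEq F] (hc : c ≠ 0) (hd : d ≠ 0) {B : Finset ι}
    (h : GenericPoints c d y B) :
    #(interpolationNodes c d y B) = 3 * #B := by
  have hscale : ∀ {a : F}, a ≠ 0 → Set.InjOn (fun k => a * y k) B :=
    fun ha _ hi _ hj e => h.injOn hi hj (mul_left_cancel₀ ha e)
  have h₁ : Disjoint (B.image y) (B.image fun k => d / c * y k) := by
    simp only [disjoint_left, mem_image, not_exists, not_and]
    rintro _ ⟨i, hi, rfl⟩ j hj e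
    exact h.mul_ne i hi j hj (by rw [← e]; field_simp)
  have h₂ : Disjoint (B.image y ∪ B.image fun k => d / c * y k)
      (B.image fun k => c / d * y k) := by
    simp only [disjoint_left, mem_union, mem_image, not_exists, not_and]
    rintro _ (⟨i, hi, rfl⟩ | ⟨i, hi, rfl⟩) j hj e
    · exact h.mul_ne j hj i hi (by rw [← e]; field_simp)
    · exact h.sq_mul_ne j hj i hi (by field_simp at e; linear_combination e)
  rw [interpolationNodes, card_union_of_disjoint h₂, card_union_of_disjoint h₁,
    card_image_of_injOn h.injOn, card_image_of_injOn (hscale (div_ne_zero hd hc)),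
    card_image_of_injOn (hscale (div_ne_zero hc hd))]
  ring

theorem GenericPoints.crossDen_ne_zero {A : Finset ι} (h : GenericPoints c d y A) :
    ∀ p ∈ A.offDiag, crossDen c d (y p.1) (y p.2) ≠ 0 := by
  intro p hp
  obtain ⟨h₁, h₂, h₁₂⟩ := mem_offDiag.mp hp
  exact mul_ne_zero (sub_ne_zero.mpr fun e => h₁₂ (h.injOn h₂ h₁ e).symm)
    (sub_ne_zero.mpr (h.mul_ne _ h₂ _ h₁))

variable [DecidableEq ι]

theorem GenericPoints.ne_of_mem_erase {A : Finset ι} (h : GenericPoints c d y A) {k : ι}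
    (hk : k ∈ A) : ∀ j ∈ A.erase k, y j ≠ y k ∧ c * y j ≠ d * y k ∧ d * y j ≠ c * y k :=
  fun j hj => ⟨fun e => Finset.ne_of_mem_erase hj (h.injOn (mem_of_mem_erase hj) hk e),
    h.mul_ne j (mem_of_mem_erase hj) k hk, fun e => h.mul_ne k hk j (mem_of_mem_erase hj) e.symm⟩

end Generic

section Induction

variable {F : Type*} [Field F] {ι : Type*} [DecidableEq ι] (c d : F) (y : ι → F)

theorem crossSum_eq_of_add_eq_card {A : Finset ι}
    (hsym : ∀ m, crossSum c d y A m = crossSum d c y A m) {n r : ℕ} (h : n + r = #A) :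
    crossSum c d y A n = crossSum c d y A r :=
  (hsym n).trans (crossSum_compl c d y h).symm

noncomputable def splitPoly (B : Finset ι) (n r : ℕ) : F[X] :=
  insertPoly c d y B n + insertPoly d c y B r

theorem eval_splitPoly {μ : ι} {B : Finset ι} (hμ : μ ∉ B)
    (hy : ∀ j ∈ B, y j ≠ y μ ∧ c * y j ≠ d * y μ ∧ d * y j ≠ c * y μ) {n r : ℕ}
    (h : n + 1 + r = #B) :
    eval (y μ) (splitPoly c d y B n r) =
      eval (y μ) (poleProd c d y B) * crossSum c d y (insert μ B) (n + 1) := by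
  rw [splitPoly, crossSum_insert c d y hμ h, eval_add,
    eval_insertPoly c d y fun j hj => ⟨(hy j hj).1, (hy j hj).2.1⟩,
    eval_insertPoly d c y fun j hj => ⟨(hy j hj).1, (hy j hj).2.2⟩, poleProd_comm, mul_add]
  congr 2 <;> refine sum_congr rfl fun T hT => ?_ <;>
    rw [crossProd_insert_left _ _ _ fun h' => hμ ((mem_powersetCard.mp hT).1 h')]

theorem natDegree_splitPoly_le (B : Finset ι) (n r : ℕ) :
    (splitPoly c d y B n r).natDegree ≤ 3 * #B :=
  natDegree_add_le_of_degree_le (natDegree_insertPoly_le c d y B n)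
    (natDegree_insertPoly_le d c y B r)

theorem coeff_splitPoly (B : Finset ι) (n r : ℕ) :
    (splitPoly c d y B n r).coeff (3 * #B) =
      (-(c * d)) ^ #B * (crossSum c d y B n + crossSum d c y B r) := by
  rw [splitPoly, coeff_add, coeff_insertPoly, coeff_insertPoly, mul_comm d c, mul_add]

variable {c d y}

theorem eval_splitPoly_sub_swap [DecidableEq F] (hc : c ≠ 0) (hd : d ≠ 0) {B : Finset ι}
    (hB : GenericPoints c d y B)
    (ih : ∀ k ∈ B, ∀ m, crossSum c d y (B.erase k) m = crossSum d c y (B.erase k) m)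
    {n r : ℕ} (h : n + 1 + r = #B) {z : F} (hz : z ∈ interpolationNodes c d y B) :
    eval z (splitPoly c d y B n r - splitPoly d c y B n r) = 0 := by
  simp only [interpolationNodes, mem_union, mem_image] at hz
  rcases hz with (⟨k, hk, rfl⟩ | ⟨k, hk, rfl⟩) | ⟨k, hk, rfl⟩ <;>
    have hcard : n + r = #(B.erase k) := by rw [card_erase_of_mem hk]; omega
  · rw [splitPoly, splitPoly, eval_sub, eval_add, eval_add,
      eval_self_insertPoly_add_swap c d y hk (hB.ne_of_mem_erase hk) hcard,
      eval_self_insertPoly_add_swap d c y hk (hB.swap.ne_of_mem_erase hk) hcard, sub_zero]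
  · have hy j hj := (hB.ne_of_mem_erase hk j hj).imp_right And.left
    rw [splitPoly, splitPoly, eval_sub, eval_add, eval_add, eval_div_mul_insertPoly c d y hc hk,
      eval_div_mul_insertPoly c d y hc hk, eval_div_mul_insertPoly_swap c d y hc hd hk hy,
      eval_div_mul_insertPoly_swap c d y hc hd hk hy,
      crossSum_eq_of_add_eq_card d c y (fun m => (ih k hk m).symm) hcard]
    ring
  · have hy j hj := (hB.swap.ne_of_mem_erase hk j hj).imp_right And.left
    rw [splitPoly, splitPoly, eval_sub, eval_add, eval_add, eval_div_mul_insertPoly d c y hd hk,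
      eval_div_mul_insertPoly d c y hd hk, eval_div_mul_insertPoly_swap d c y hd hc hk hy,
      eval_div_mul_insertPoly_swap d c y hd hc hk hy,
      crossSum_eq_of_add_eq_card c d y (ih k hk) hcard]
    ring

theorem splitPoly_comm (hc : c ≠ 0) (hd : d ≠ 0) {B : Finset ι} (hB : GenericPoints c d y B)
    (ih : ∀ B' ⊆ B, ∀ m, crossSum c d y B' m = crossSum d c y B' m) {n r : ℕ}
    (h : n + 1 + r = #B) :
    splitPoly c d y B n r = splitPoly d c y B n r := by
  classical
  rw [← sub_eq_zero]
  refine eq_zero_of_natDegree_le_card_of_eval_eq_zero (interpolationNodes c d y B) ?_ ?_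
    fun z hz => eval_splitPoly_sub_swap hc hd hB (fun k _ => ih _ (erase_subset k B)) h hz
  · rw [card_interpolationNodes hc hd hB]
    exact (natDegree_sub_le _ _).trans
      (max_le (natDegree_splitPoly_le c d y B n r) (natDegree_splitPoly_le d c y B n r))
  · rw [card_interpolationNodes hc hd hB, coeff_sub, coeff_splitPoly, coeff_splitPoly,
      mul_comm d c, ih B subset_rfl n, ih B subset_rfl r]
    ring

theorem crossSum_insert_comm (hc : c ≠ 0) (hd : d ≠ 0) {μ : ι} {B : Finset ι} (hμ : μ ∉ B)
    (hA : GenericPoints c d y (insert μ B))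
    (ih : ∀ B' ⊆ B, ∀ m, crossSum c d y B' m = crossSum d c y B' m) {n r : ℕ}
    (h : n + 1 + r = #B) :
    crossSum c d y (insert μ B) (n + 1) = crossSum d c y (insert μ B) (n + 1) := by
  have hy := hA.ne_of_mem_erase (mem_insert_self μ B)
  rw [erase_insert hμ] at hy
  have hQ : eval (y μ) (poleProd c d y B) ≠ 0 := by
    simp only [poleProd, poleCubic, eval_prod, eval_mul, eval_sub, eval_C, eval_X]
    exact prod_ne_zero_iff.mpr fun j hj => mul_ne_zero (mul_ne_zero (sub_ne_zero.mpr (hy j hj).1)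
      (sub_ne_zero.mpr (hy j hj).2.1)) (sub_ne_zero.mpr (hy j hj).2.2)
  refine mul_left_cancel₀ hQ ?_
  rw [← eval_splitPoly c d y hμ hy h, splitPoly_comm hc hd (hA.mono (subset_insert μ B)) ih h,
    ← poleProd_comm, eval_splitPoly d c y hμ
    (fun j hj => ⟨(hy j hj).1, (hy j hj).2.2, (hy j hj).2.1⟩) h]

theorem crossSum_comm_of_generic (hc : c ≠ 0) (hd : d ≠ 0) {A : Finset ι}
    (hA : GenericPoints c d y A) (n : ℕ) : crossSum c d y A n = crossSum d c y A n := by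
  induction A using Finset.strongInduction generalizing n with
  | H A ih =>
  rcases n with _ | n
  · rw [crossSum_zero, crossSum_zero]
  rcases lt_trichotomy (n + 1) #A with hlt | heq | hgt
  · obtain ⟨μ, hμ⟩ : A.Nonempty := card_pos.mp (by omega)
    have hsub : ∀ B' ⊆ A.erase μ, B' ⊂ A := fun B' hB' => hB'.trans_ssubset (erase_ssubset hμ)
    rw [← insert_erase hμ] at hA ⊢
    exact crossSum_insert_comm hc hd (notMem_erase μ A) hA
      (fun B' hB' => ih B' (hsub B' hB') (hA.mono ((hB'.trans (subset_insert _ _)))))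
      (r := #(A.erase μ) - (n + 1)) (by rw [card_erase_of_mem hμ]; omega)
  · rw [heq, crossSum_card, crossSum_card]
  · rw [crossSum_of_card_lt _ _ _ hgt, crossSum_of_card_lt _ _ _ hgt]

end Induction

section ClearedSum

variable {R : Type*} [CommRing R] {ι : Type*}

def denProd (c d : R) (y : ι → R) (A : Finset ι) : R :=
  ∏ p ∈ A.offDiag, crossDen c d (y p.1) (y p.2)

theorem denProd_comm (c d : R) (y : ι → R) (A : Finset ι) : denProd d c y A = denProd c d y A :=
  prod_nbij' Prod.swap Prod.swap (fun _ => swap_mem_offDiag) (fun _ => swap_mem_offDiag)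
    (fun _ _ => rfl) (fun _ _ => rfl) fun _ _ => crossDen_swap c d _ _

variable [DecidableEq ι]

def clearedSum (c d : R) (y : ι → R) (A : Finset ι) (n : ℕ) : R :=
  ∑ S ∈ A.powersetCard n, ∏ p ∈ A.offDiag,
    if p.1 ∈ S ∧ p.2 ∉ S then crossNum c d (y p.1) (y p.2) else crossDen c d (y p.1) (y p.2)

theorem map_clearedSum {S : Type*} [CommRing S] (φ : R →+* S) (c d : R) (y : ι → R)
    (A : Finset ι) (n : ℕ) :
    φ (clearedSum c d y A n) = clearedSum (φ c) (φ d) (fun i => φ (y i)) A n := by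
  simp [clearedSum, crossNum, crossDen, apply_ite φ]

theorem crossSum_mul_denProd {F : Type*} [Field F] {c d : F} {y : ι → F} {A : Finset ι}
    (hden : ∀ p ∈ A.offDiag, crossDen c d (y p.1) (y p.2) ≠ 0) (n : ℕ) :
    crossSum c d y A n * denProd c d y A = clearedSum c d y A n := by
  rw [crossSum, sum_mul, clearedSum]
  refine sum_congr rfl fun S hS => ?_
  have hpairs : S ×ˢ (A \ S) = A.offDiag.filter fun p => p.1 ∈ S ∧ p.2 ∉ S := by
    have hSA := (mem_powersetCard.mp hS).1
    ext ⟨i, j⟩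
    simp only [mem_product, mem_sdiff, mem_filter, mem_offDiag]
    constructor
    · rintro ⟨hi, hj, hjS⟩
      exact ⟨⟨hSA hi, hj, fun e => hjS (e ▸ hi)⟩, hi, hjS⟩
    · rintro ⟨⟨-, hj, -⟩, hi, hjS⟩
      exact ⟨hi, hj, hjS⟩
  rw [crossProd, ← prod_product', hpairs, prod_filter, denProd, ← prod_mul_distrib]
  refine prod_congr rfl fun p hp => ?_
  split_ifs
  · exact div_mul_cancel₀ _ (hden p hp)
  · exact one_mul _

end ClearedSum

section Transfer

variable {ι : Type*} [DecidableEq ι]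

open MvPolynomial in
theorem clearedSum_comm_universal (A : Finset ι) (n : ℕ) :
    clearedSum (X (Sum.inl true)) (X (Sum.inl false)) (fun i => X (Sum.inr i)) A n =
      (clearedSum (X (Sum.inl false)) (X (Sum.inl true)) (fun i => X (Sum.inr i)) A n :
        MvPolynomial (Bool ⊕ ι) ℤ) := by
  let φ := algebraMap (MvPolynomial (Bool ⊕ ι) ℤ) (FractionRing (MvPolynomial (Bool ⊕ ι) ℤ))
  have hφ : Function.Injective φ := IsFractionRing.injective _ _
  have hsep : ∀ a ≠ 0, ∀ i j : ι,
      φ (X (Sum.inl true)) ^ a * φ (X (Sum.inr i)) ≠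
        φ (X (Sum.inl false)) ^ a * φ (X (Sum.inr j)) := by
    intro a ha i j e
    rw [← map_pow, ← map_mul, ← map_pow, ← map_mul] at e
    have := congrArg
      (MvPolynomial.eval (Sum.elim (fun b => bif b then 1 else 0) fun _ => (1 : ℤ))) (hφ e)
    simp [zero_pow ha] at this
  have hgen : GenericPoints (φ (X (Sum.inl true))) (φ (X (Sum.inl false)))
      (fun i => φ (X (Sum.inr i))) A :=
    ⟨fun i _ j _ e => Sum.inr_injective (X_injective (hφ e)),
      fun i _ j _ => by simpa using hsep 1 one_ne_zero i j, fun i _ j _ => hsep 2 two_ne_zero i j⟩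
  have hX : ∀ b, φ (X (Sum.inl b)) ≠ 0 := fun b => (map_ne_zero_iff φ hφ).mpr (X_ne_zero _)
  apply hφ
  rw [map_clearedSum, map_clearedSum, ← crossSum_mul_denProd hgen.crossDen_ne_zero,
    ← crossSum_mul_denProd hgen.swap.crossDen_ne_zero, crossSum_comm_of_generic (hX _) (hX _) hgen,
    denProd_comm]

theorem crossSum_comm {F : Type*} [Field F] (c d : F) (y : ι → F) {A : Finset ι}
    (hden : ∀ p ∈ A.offDiag, crossDen c d (y p.1) (y p.2) ≠ 0) (n : ℕ) :
    crossSum c d y A n = crossSum d c y A n := by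
  have key := congrArg (MvPolynomial.eval₂Hom (Int.castRingHom F)
    (Sum.elim (fun b => bif b then c else d) y)) (clearedSum_comm_universal A n)
  simp only [map_clearedSum, MvPolynomial.eval₂Hom_X', Sum.elim_inl, Sum.elim_inr, cond_true,
    cond_false] at key
  have hden' : ∀ p ∈ A.offDiag, crossDen d c (y p.1) (y p.2) ≠ 0 := fun p hp => by
    rw [crossDen_swap]
    exact hden p.swap (swap_mem_offDiag hp)
  have hD : denProd c d y A ≠ 0 := prod_ne_zero_iff.mpr hden
  refine mul_right_cancel₀ hD ?_
  rw [crossSum_mul_denProd hden, ← denProd_comm, crossSum_mul_denProd hden', key]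

end Transfer

theorem etaPP_div_etaMP {q t a b : ℂ} (hq : q ≠ 0) (ht : t ≠ 0) (ha : a ≠ 0) (hb : b ≠ 0) :
    etaPP q t (a / b) / etaMP q t (a / b) = crossFactor (q ^ 2) (t ^ 2) (a ^ 2) (b ^ 2) := by
  unfold etaPP etaMP crossFactor crossNum crossDen
  field_simp

theorem crossDen_ne_zero_of_div_notMem {K : Type*} [Field K] {q t a b : K} (ht : t ≠ 0)
    (hb : b ≠ 0)
    (h : a / b ∉
      ({1, t ^ 2, (t ^ 2)⁻¹, q ^ 2, (q ^ 2)⁻¹, q ^ 2 * (t ^ 2)⁻¹, (q ^ 2)⁻¹ * t ^ 2} : Set K)) :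
    crossDen (q ^ 2) (t ^ 2) a b ≠ 0 := by
  simp only [Set.mem_insert_iff, Set.mem_singleton_iff, not_or] at h
  obtain ⟨h₁, -, -, -, -, h₂, -⟩ := h
  refine mul_ne_zero (sub_ne_zero.mpr fun e => h₁ ?_) (sub_ne_zero.mpr fun e => h₂ ?_)
  · rw [← e, div_self hb]
  · field_simp; linear_combination -e

section Gamma

variable {q t : ℂ} {m : ℕ} {x : Fin m → ℂ}

theorem gammaCoeff_eq_crossProd (hq : q ≠ 0) (ht : t ≠ 0) (hx : ∀ i, x i ≠ 0)
    (ε : Fin m → Bool) :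
    gammaCoeff q t x ε = crossProd (q ^ 2) (t ^ 2) (fun i => x i ^ 2)
      (univ.filter fun i => ε i = false) (univ \ univ.filter fun i => ε i = false) := by
  have hplus : (univ.filter fun j => ε j = true) = univ \ univ.filter fun i => ε i = false := by
    ext j; simp
  rw [gammaCoeff, hplus, crossProd]
  exact prod_congr rfl fun i _ => prod_congr rfl fun j _ => etaPP_div_etaMP hq ht (hx i) (hx j)

theorem sum_gammaCoeff_eq_crossSum (hq : q ≠ 0) (ht : t ≠ 0) (hx : ∀ i, x i ≠ 0) (k : ℕ) :
    ∑ ε ∈ univ.filter (fun ε : Fin m → Bool => (univ.filter (fun i => ε i = false)).card = k),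
      gammaCoeff q t x ε = crossSum (q ^ 2) (t ^ 2) (fun i => x i ^ 2) univ k := by
  simp only [gammaCoeff_eq_crossProd hq ht hx]
  exact sum_filter_card_eq_sum_powersetCard (fun S => crossProd _ _ _ S (univ \ S)) k

end Gamma

theorem stmt2_general (q t : ℂ) (hq : q ≠ 0) (ht : t ≠ 0) (m : ℕ)
    (x : Fin m → ℂ) (hx : ∀ i, x i ≠ 0)
    (hgen : ∀ i j : Fin m, i ≠ j →
      (x i) ^ 2 / (x j) ^ 2 ∉
        ({1, t ^ 2, (t ^ 2)⁻¹, q ^ 2, (q ^ 2)⁻¹, q ^ 2 * (t ^ 2)⁻¹, (q ^ 2)⁻¹ * t ^ 2} : Set ℂ))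
    (n : ℕ) (hn : n ≤ m) :
    ∑ ε ∈ univ.filter
        (fun ε : Fin m → Bool => (univ.filter (fun i => ε i = false)).card = n),
      gammaCoeff q t x ε =
    ∑ ε ∈ univ.filter
        (fun ε : Fin m → Bool => (univ.filter (fun i => ε i = false)).card = m - n),
      gammaCoeff q t x ε := by
  have hden : ∀ p ∈ (univ : Finset (Fin m)).offDiag,
      crossDen (q ^ 2) (t ^ 2) (x p.1 ^ 2) (x p.2 ^ 2) ≠ 0 := fun p hp =>
    crossDen_ne_zero_of_div_notMem ht (pow_ne_zero 2 (hx p.2))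
      (hgen p.1 p.2 (mem_offDiag.mp hp).2.2)
  rw [sum_gammaCoeff_eq_crossSum hq ht hx, sum_gammaCoeff_eq_crossSum hq ht hx,
    crossSum_compl _ _ _ (n := n) (r := m - n) (by rw [card_univ, Fintype.card_fin]; omega)]
  exact crossSum_comm (q ^ 2) (t ^ 2) (fun i => x i ^ 2) hden n

/-- Identity (3.20) of Theorem 3.1 of the paper: the sum of `γ_ε(q,t)` over sign vectors
with exactly `n` minus signs equals the sum over sign vectors with exactly `m - n` minus
signs. -/
theorem stmt2 (q t : ℂ) (hq : q ≠ 0) (ht : t ≠ 0) (m : ℕ) (hm : 1 ≤ m)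
    (x : Fin m → ℂ) (hx : ∀ i, x i ≠ 0)
    (hgen : ∀ i j : Fin m, i ≠ j →
      (x i) ^ 2 / (x j) ^ 2 ∉
        ({1, t ^ 2, (t ^ 2)⁻¹, q ^ 2, (q ^ 2)⁻¹, q ^ 2 * (t ^ 2)⁻¹, (q ^ 2)⁻¹ * t ^ 2} : Set ℂ))
    (n : ℕ) (hn : n ≤ m) :
    ∑ ε ∈ univ.filter
        (fun ε : Fin m → Bool => (univ.filter (fun i => ε i = false)).card = n),
      gammaCoeff q t x ε =
    ∑ ε ∈ univ.filter
        (fun ε : Fin m → Bool => (univ.filter (fun i => ε i = false)).card = m - n),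
      gammaCoeff q t x ε :=
  stmt2_general q t hq ht m x hx hgen n hn
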